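/- arXiv:math/0410484 — 3 statements merged into one kernel-verified Lean document; each statement's English description precedes it below -/
import Mathlib

section
/- Let F(t) = (t-1)ln(t-1) - t ln t - t + 1 for t > 1. Then F''(t) = 1/(t-1) - 1/t = 1/(t(t-1)), and the scalar curvature expression S(t) = t^{1-n} · d²/dt² [ t^{n+1} F''(t) / (1 + t F''(t)) ] equals (n² - 3n + 2)/t². -/
open Real Filter

private lemma burns_hasDerivAt1 (x : ℝ) (hx : 1 < x) :
    HasDerivAt (fun t : ℝ => (t - 1) * Real.log (t - 1) - t * Real.log t - t + 1)
      (Real.log (x - 1) - Real.log x - 1) x := by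
  have hx0 : x ≠ 0 := by linarith
  have hx1 : x - 1 ≠ 0 := sub_ne_zero.mpr (by linarith)
  have h1 : HasDerivAt (fun t : ℝ => t - 1) 1 x := (hasDerivAt_id x).sub_const 1
  have h2 : HasDerivAt (fun t : ℝ => Real.log (t - 1)) (1 / (x - 1)) x := by
    simpa [one_div, Function.comp_def] using (Real.hasDerivAt_log hx1).comp x h1
  have h3 : HasDerivAt (fun t : ℝ => (t - 1) * Real.log (t - 1))
      (1 * Real.log (x - 1) + (x - 1) * (1 / (x - 1))) x := h1.mul h2
  have h4 : HasDerivAt (fun t : ℝ => t * Real.log t)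
      (1 * Real.log x + x * (1 / x)) x := by
    simpa [one_div, Pi.mul_def] using (hasDerivAt_id x).mul (Real.hasDerivAt_log hx0)
  have h5 := ((h3.sub h4).sub (hasDerivAt_id x)).add_const 1
  refine h5.congr_deriv ?_
  rw [mul_one_div_cancel hx1, mul_one_div_cancel hx0]; ring

private lemma burns_hasDerivAt2 (x : ℝ) (hx : 1 < x) :
    HasDerivAt (fun u : ℝ => Real.log (u - 1) - Real.log u - 1)
      (1 / (x - 1) - 1 / x) x := by
  have hx0 : x ≠ 0 := by linarith
  have hx1 : x - 1 ≠ 0 := sub_ne_zero.mpr (by linarith)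
  have h1 : HasDerivAt (fun t : ℝ => t - 1) 1 x := (hasDerivAt_id x).sub_const 1
  have h2 : HasDerivAt (fun t : ℝ => Real.log (t - 1)) (1 / (x - 1)) x := by
    simpa [one_div, Function.comp_def] using (Real.hasDerivAt_log hx1).comp x h1
  have h3 : HasDerivAt Real.log (1 / x) x := by
    simpa [one_div] using Real.hasDerivAt_log hx0
  exact (h2.sub h3).sub_const 1

theorem generalized_burns_scalar_curvature (n : ℕ) (hn : 1 ≤ n)
    (F : ℝ → ℝ) (hF : F = fun t => (t - 1) * Real.log (t - 1) - t * Real.log t - t + 1)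
    (t : ℝ) (ht : 1 < t) :
    deriv (deriv F) t = 1 / (t - 1) - 1 / t ∧
    deriv (deriv F) t = 1 / (t * (t - 1)) ∧
    t ^ ((1 : ℤ) - (n : ℤ)) *
      deriv (deriv (fun u : ℝ =>
        u ^ (n + 1) * deriv (deriv F) u / (1 + u * deriv (deriv F) u))) t
      = ((n : ℝ) ^ 2 - 3 * (n : ℝ) + 2) / t ^ 2 := by
  subst hF
  have hIoi : ∀ x : ℝ, 1 < x → Set.Ioi (1:ℝ) ∈ nhds x := fun x hx =>
    Ioi_mem_nhds hx
  have hd1 : ∀ x : ℝ, 1 < x →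
      deriv (fun t : ℝ => (t - 1) * Real.log (t - 1) - t * Real.log t - t + 1) x
        = Real.log (x - 1) - Real.log x - 1 := fun x hx => (burns_hasDerivAt1 x hx).deriv
  have hF'' : ∀ x : ℝ, 1 < x →
      deriv (deriv (fun t : ℝ => (t - 1) * Real.log (t - 1) - t * Real.log t - t + 1)) x
        = 1 / (x - 1) - 1 / x := by
    intro x hx
    have hev : deriv (fun t : ℝ => (t - 1) * Real.log (t - 1) - t * Real.log t - t + 1)
        =ᶠ[nhds x] fun u => Real.log (u - 1) - Real.log u - 1 :=
      eventually_of_mem (hIoi x hx) (fun y hy => hd1 y hy)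
    rw [hev.deriv_eq]
    exact (burns_hasDerivAt2 x hx).deriv
  constructor
  · exact hF'' t ht
  constructor
  · rw [hF'' t ht]
    have ht0 : t ≠ 0 := by linarith
    have ht1 : t - 1 ≠ 0 := sub_ne_zero.mpr (by linarith)
    field_simp
    ring
  -- main part
  have hevG : (fun u : ℝ =>
      u ^ (n + 1) *
        deriv (deriv (fun t : ℝ => (t - 1) * Real.log (t - 1) - t * Real.log t - t + 1)) u /
        (1 + u * deriv (deriv (fun t : ℝ => (t - 1) * Real.log (t - 1) - t * Real.log t - t + 1)) u))
      =ᶠ[nhds t] fun u : ℝ => u ^ (n - 1) := by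
    refine eventually_of_mem (hIoi t ht) (fun u hu => ?_)
    have hu' : (1:ℝ) < u := hu
    have hu0 : u ≠ 0 := by linarith
    have hu1 : u - 1 ≠ 0 := sub_ne_zero.mpr (by linarith)
    dsimp only
    rw [hF'' u hu']
    have hden : 1 + u * (1 / (u - 1) - 1 / u) = u / (u - 1) := by
      field_simp
      ring
    rw [hden]
    have hdenne : u / (u - 1) ≠ 0 := div_ne_zero hu0 hu1
    rw [div_eq_iff hdenne]
    have hsplit : n + 1 = (n - 1) + 2 := by omega
    rw [hsplit, pow_add]
    field_simp
    ring
  have hGd : deriv (deriv (fun u : ℝ =>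
      u ^ (n + 1) *
        deriv (deriv (fun t : ℝ => (t - 1) * Real.log (t - 1) - t * Real.log t - t + 1)) u /
        (1 + u * deriv (deriv (fun t : ℝ => (t - 1) * Real.log (t - 1) - t * Real.log t - t + 1)) u))) t
      = deriv (deriv (fun u : ℝ => u ^ (n - 1))) t := hevG.deriv.deriv_eq
  rw [hGd]
  have hdp : deriv (fun u : ℝ => u ^ (n - 1)) = fun u : ℝ => ((n - 1 : ℕ) : ℝ) * u ^ (n - 1 - 1) := by
    funext x
    simp [deriv_pow]
  rw [hdp]
  have hdp2 : deriv (fun u : ℝ => ((n - 1 : ℕ) : ℝ) * u ^ (n - 1 - 1)) t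
      = ((n - 1 : ℕ) : ℝ) * (((n - 1 - 1 : ℕ) : ℝ) * t ^ (n - 1 - 1 - 1)) := by
    exact ((hasDerivAt_pow (n - 1 - 1) t).const_mul _).deriv
  rw [hdp2]
  have ht0 : t ≠ 0 := by linarith
  rcases Nat.lt_or_ge n 3 with h3 | h3
  · interval_cases n <;> norm_num
  · have e1 : ((n - 1 : ℕ) : ℝ) = (n : ℝ) - 1 := by
      push_cast [Nat.cast_sub (by omega : 1 ≤ n)]; ring
    have e2 : ((n - 1 - 1 : ℕ) : ℝ) = (n : ℝ) - 2 := by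
      have : n - 1 - 1 = n - 2 := by omega
      rw [this]; push_cast [Nat.cast_sub (by omega : 2 ≤ n)]; ring
    have e3 : n - 1 - 1 - 1 = n - 3 := by omega
    rw [e1, e2, e3]
    have e4 : (t : ℝ) ^ (n - 3) = t ^ ((n : ℤ) - 3) := by
      rw [← zpow_natCast]
      congr 1
      omega
    rw [e4]
    have e5 : t ^ ((1 : ℤ) - (n : ℤ)) * (((n:ℝ) - 1) * (((n:ℝ) - 2) * t ^ ((n : ℤ) - 3)))
        = ((n:ℝ) - 1) * ((n:ℝ) - 2) * (t ^ ((1 : ℤ) - (n : ℤ)) * t ^ ((n : ℤ) - 3)) := by ring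
    rw [e5, ← zpow_add₀ ht0]
    have : (1 : ℤ) - (n : ℤ) + ((n : ℤ) - 3) = -2 := by ring
    rw [this]
    rw [zpow_neg, show ((2:ℤ)) = ((2:ℕ):ℤ) by norm_num, zpow_natCast]
    field_simp
    ring
end

section
/- Let n ≥ 1, x₁,...,xₙ > 0, t = ∑ xᵢ, and c ∈ ℝ. The n×n symmetric matrix G with G_{ij} = (1/2)(δ_{ij}/x_i + c) is positive definite if and only if c > -1/t. -/
theorem sun_hessian_posdef_iff (n : ℕ) (hn : 1 ≤ n)
    (x : Fin n → ℝ) (hx : ∀ i, 0 < x i) (c : ℝ)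
    (t : ℝ) (ht : t = ∑ i, x i)
    (G : Matrix (Fin n) (Fin n) ℝ)
    (hG : G = Matrix.of fun i j => (1 / 2 : ℝ) * ((if i = j then 1 / x i else 0) + c)) :
    G.PosDef ↔ -1 / t < c := by
  have ht0 : 0 < t := by
    rw [ht]
    exact Finset.sum_pos (fun i _ => hx i) (Finset.univ_nonempty_iff.2
      (Fin.pos_iff_nonempty.mp hn))
  -- quadratic form computation
  have hquad : ∀ v : Fin n → ℝ,
      dotProduct (star v) (G.mulVec v)
        = (1/2) * ((∑ i, v i ^ 2 / x i) + c * (∑ i, v i) ^ 2) := by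
    intro v
    have hmv : ∀ i, (G.mulVec v) i = (1/2) * (v i / x i + c * ∑ j, v j) := by
      intro i
      subst hG
      simp only [Matrix.mulVec, dotProduct, Matrix.of_apply]
      rw [show (∑ j, (1/2 : ℝ) * ((if i = j then 1 / x i else 0) + c) * v j)
          = ∑ j, ((if i = j then (1/2 : ℝ) * (v j / x i) else 0) + 1/2 * (c * v j)) from
        Finset.sum_congr rfl fun j _ => by split <;> ring]
      rw [Finset.sum_add_distrib, Finset.sum_ite_eq, if_pos (Finset.mem_univ i),
        ← Finset.mul_sum, ← Finset.mul_sum]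
      ring
    simp only [star_trivial, dotProduct]
    rw [show (∑ i, v i * (G.mulVec v) i)
        = ∑ i, ((1/2) * (v i ^ 2 / x i) + (1/2 * c * v i) * ∑ j, v j) from
      Finset.sum_congr rfl fun i _ => by rw [hmv i]; ring]
    rw [Finset.sum_add_distrib, ← Finset.sum_mul, ← Finset.mul_sum, ← Finset.mul_sum]
    ring
  constructor
  · intro hpd
    have hx0 : x ≠ 0 := by
      intro h
      exact absurd (congrFun h ⟨0, hn⟩) (ne_of_gt (hx ⟨0, hn⟩))
    have hpos := hpd.dotProduct_mulVec_pos hx0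
    rw [hquad x] at hpos
    have hsum : (∑ i, x i ^ 2 / x i) = t := by
      rw [ht]
      exact Finset.sum_congr rfl fun i _ => by
        field_simp [pow_two, (hx i).ne']
    rw [hsum, ← ht] at hpos
    rw [div_lt_iff₀ ht0]
    nlinarith [hpos, ht0]
  · intro hc
    have hct : -1 < c * t := by rw [div_lt_iff₀ ht0] at hc; linarith
    refine Matrix.posDef_iff_dotProduct_mulVec.mpr ⟨?_, ?_⟩
    · subst hG
      ext i j
      simp only [Matrix.conjTranspose_apply, Matrix.of_apply, star_trivial]
      by_cases h : i = j <;> simp [h, eq_comm]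
    · intro v hv
      rw [hquad v]
      have hS : 0 < ∑ i, v i ^ 2 / x i := by
        obtain ⟨i, hi⟩ := Function.ne_iff.mp hv
        exact Finset.sum_pos' (fun j _ => div_nonneg (sq_nonneg _) (hx j).le)
          ⟨i, Finset.mem_univ i,
            div_pos (lt_of_le_of_ne (sq_nonneg _) (Ne.symm (pow_ne_zero 2 hi))) (hx i)⟩
      have hCS : (∑ i, v i) ^ 2 / t ≤ ∑ i, v i ^ 2 / x i := by
        rw [ht]
        exact Finset.sq_sum_div_le_sum_sq_div _ _ (fun i _ => hx i)
      have hP : (∑ i, v i) ^ 2 ≤ (∑ i, v i ^ 2 / x i) * t := (div_le_iff₀ ht0).mp hCS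
      rcases le_or_gt 0 c with h0 | h0
      · have : 0 ≤ c * (∑ i, v i) ^ 2 := mul_nonneg h0 (sq_nonneg _)
        linarith
      · nlinarith [mul_nonneg (neg_nonneg.2 h0.le) (sub_nonneg.2 hP),
          mul_pos hS (show (0:ℝ) < 1 + c * t by linarith)]
end

section
/- Let n ≥ 2 and c(t) = ((n-1)t + 2-n)/(t(t^n - (n-1)t - 2 + n)) for t > 1. Then 2^n(1 + t·c(t))^{-1} · ∏_{i=1}^n x_i = δ(t) · (∏_{i=1}^n x_i) · (t-1), where δ(t) = 2^n t^{-n} (∑_{i=1}^{n-1} t^i - (n-2)), t = ∑ x_i, and x_i > 0; i.e., det G^{-1} factors as δ(x)·∏_{i=1}^{n+1} l_i(x) with l_i(x) = x_i for i ≤ n and l_{n+1}(x) = t - 1. -/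
/-! Since `1 + t c(t) = t^n / (t^n - (n-1)t - 2 + n)`, everything rests on the factorization
`t^n - (n-1)t - 2 + n = (∑_{i=1}^{n-1} t^i - (n-2)) (t-1)`, which is the geometric sum
`(1 + t + ⋯ + t^{n-1})(t-1) = t^n - 1` rearranged; for `t > 1` the first factor (that is
`t^n δ(t) / 2^n`) is positive because each `t^i ≥ 1`, so no denominator vanishes. -/

open Finset

section GeomSum

variable {R : Type*} [CommRing R]

theorem sum_Icc_one_pow_add_one_mul_sub_one (t : R) {n : ℕ} (hn : 1 ≤ n) :
    (∑ i ∈ Icc 1 (n - 1), t ^ i + 1) * (t - 1) = t ^ n - 1 := by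
  obtain ⟨m, rfl⟩ := Nat.exists_eq_add_of_le' hn
  rw [Nat.add_sub_cancel, ← geom_sum_mul, sum_range_succ', ← Ico_add_one_right_eq_Icc,
    sum_Ico_eq_sum_range, Nat.add_sub_cancel, pow_zero]
  simp only [add_comm 1]

theorem pow_sub_linear_eq_mul_sub_one (t : R) {n : ℕ} (hn : 1 ≤ n) :
    t ^ n - ((n : R) - 1) * t - 2 + n
      = (∑ i ∈ Icc 1 (n - 1), t ^ i - ((n : R) - 2)) * (t - 1) := by
  linear_combination -sum_Icc_one_pow_add_one_mul_sub_one t hn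

end GeomSum

theorem natCast_sub_two_lt_sum_Icc_one_pow {R : Type*} [CommRing R] [LinearOrder R]
    [IsStrictOrderedRing R] {t : R} (ht : 1 ≤ t) (n : ℕ) :
    (n : R) - 2 < ∑ i ∈ Icc 1 (n - 1), t ^ i := by
  have hcard : (n : R) ≤ ((n - 1 : ℕ) : R) + 1 := by exact_mod_cast (by omega : n ≤ n - 1 + 1)
  have hsum : ((n - 1 : ℕ) : R) ≤ ∑ i ∈ Icc 1 (n - 1), t ^ i := by
    simpa using card_nsmul_le_sum (Icc 1 (n - 1)) (t ^ ·) 1 fun i _ => one_le_pow₀ ht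
  linarith

theorem abreu_boundary_condition_factorization_general (n : ℕ) (hn : 2 ≤ n)
    (x : Fin n → ℝ)
    (t : ℝ) (ht1 : 1 < t)
    (c : ℝ → ℝ)
    (hc : c = fun u => (((n : ℝ) - 1) * u + 2 - (n : ℝ)) /
      (u * (u ^ n - ((n : ℝ) - 1) * u - 2 + (n : ℝ))))
    (δ : ℝ → ℝ)
    (hδ : δ = fun u => 2 ^ n / u ^ n * (∑ i ∈ Finset.Icc 1 (n - 1), u ^ i - ((n : ℝ) - 2))) :
    2 ^ n * (1 + t * c t)⁻¹ * ∏ i, x i = δ t * (∏ i, x i) * (t - 1) := by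
  subst hc hδ
  have ht0 : t ≠ 0 := (zero_lt_one.trans ht1).ne'
  have hP := sub_pos.2 (natCast_sub_two_lt_sum_Icc_one_pow ht1.le n)
  have hfactor := pow_sub_linear_eq_mul_sub_one t (n := n) (by omega)
  have hD : t ^ n - ((n : ℝ) - 1) * t - 2 + n ≠ 0 := by
    rw [hfactor]; exact (mul_pos hP (sub_pos.2 ht1)).ne'
  have hdenom : 1 + t * ((((n : ℝ) - 1) * t + 2 - n) / (t * (t ^ n - ((n : ℝ) - 1) * t - 2 + n)))
      = t ^ n / (t ^ n - ((n : ℝ) - 1) * t - 2 + n) := by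
    rw [← mul_div_assoc, mul_div_mul_left _ _ ht0, one_add_div hD]
    ring
  dsimp only
  rw [hdenom, inv_div, hfactor]
  field_simp

theorem abreu_boundary_condition_factorization (n : ℕ) (hn : 2 ≤ n)
    (x : Fin n → ℝ) (hx : ∀ i, 0 < x i)
    (t : ℝ) (ht : t = ∑ i, x i) (ht1 : 1 < t)
    (c : ℝ → ℝ)
    (hc : c = fun u => (((n : ℝ) - 1) * u + 2 - (n : ℝ)) /
      (u * (u ^ n - ((n : ℝ) - 1) * u - 2 + (n : ℝ))))
    (δ : ℝ → ℝ)
    (hδ : δ = fun u => 2 ^ n / u ^ n * (∑ i ∈ Finset.Icc 1 (n - 1), u ^ i - ((n : ℝ) - 2))) :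
    2 ^ n * (1 + t * c t)⁻¹ * ∏ i, x i = δ t * (∏ i, x i) * (t - 1) :=
  abreu_boundary_condition_factorization_general n hn x t ht1 c hc δ hδ
end
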